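/- arXiv:1702.04138 — 7 statements merged into one kernel-verified Lean document; each statement's English description precedes it below -/
import Mathlib

section
/- Let n ≥ 2 and 0 < p_1 ≤ … ≤ p_{n-1} < 1 ≥ p_n > 0, with λ = ∏_{j=1}^{n-1}(1-p_j). In any Nash equilibrium of the common-value all-pay auction with failures, for any two bidders i and j, their equilibrium expected profits conditional on participating are equal: π*_i = π*_j. -/
/-!
Let `b` be the top of bidder `j`'s support, so `F j b = 1`. Every factor
`p k * F k b + 1 - p k` lies in `[0, 1]` and bidder `j`'s factor equals `1`, so dropping bidder
`i`'s factor instead of bidder `j`'s can only increase the product: `payoff j b ≤ payoff i b`.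
Hence `π*_j = payoff j b ≤ payoff i b ≤ π*_i`, and by symmetry the profits are equal.
-/

/-- Common-value all-pay auction with failures. Bidder `j` participates with probability
`p j` and bids according to the CDF `F j`; the expected payoff of bidder `i` (conditional on
participating) from a bid `x` is `∏_{j ≠ i} (p j * F j x + 1 - p j) - x`. -/
noncomputable def payoff (n : ℕ) (p : ℕ → ℝ) (F : ℕ → ℝ → ℝ) (i : ℕ) (x : ℝ) : ℝ :=
  (∏ j ∈ (Finset.Icc 1 n).erase i, (p j * F j x + 1 - p j)) - x

open Finset

theorem Finset.prod_erase_le_prod_erase_of_eq_one {ι R : Type*} [DecidableEq ι]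
    [CommSemiring R] [PartialOrder R] [IsOrderedRing R] {s : Finset ι} {f : ι → R} {i j : ι}
    (hi : i ∈ s) (hj : j ∈ s) (hf0 : ∀ k ∈ s, 0 ≤ f k) (hf1 : ∀ k ∈ s, f k ≤ 1)
    (hfj : f j = 1) : ∏ k ∈ s.erase j, f k ≤ ∏ k ∈ s.erase i, f k := by
  have hprod : ∏ k ∈ s.erase j, f k = (∏ k ∈ s.erase i, f k) * f i := by
    rw [prod_erase_mul s f hi, ← prod_erase_mul s f hj, hfj, mul_one]
  rw [hprod]
  exact mul_le_of_le_one_right (prod_nonneg fun k hk => hf0 k (mem_of_mem_erase hk)) (hf1 i hi)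

lemma participation_factor_mem_Icc {q y : ℝ} (hq0 : 0 ≤ q) (hq1 : q ≤ 1)
    (hy0 : 0 ≤ y) (hy1 : y ≤ 1) : q * y + 1 - q ∈ Set.Icc (0 : ℝ) 1 :=
  ⟨by nlinarith, by nlinarith⟩

lemma payoff_le_payoff_of_eq_one {n : ℕ} {p : ℕ → ℝ} {F : ℕ → ℝ → ℝ} {i j : ℕ} {x : ℝ}
    (hp : ∀ k ∈ Icc 1 n, p k ∈ Set.Icc (0 : ℝ) 1) (hF : ∀ k ∈ Icc 1 n, F k x ∈ Set.Icc (0 : ℝ) 1)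
    (hi : i ∈ Icc 1 n) (hj : j ∈ Icc 1 n) (hFj : F j x = 1) :
    payoff n p F j x ≤ payoff n p F i x := by
  have hfactor : ∀ k ∈ Icc 1 n, p k * F k x + 1 - p k ∈ Set.Icc (0 : ℝ) 1 := fun k hk =>
    participation_factor_mem_Icc (hp k hk).1 (hp k hk).2 (hF k hk).1 (hF k hk).2
  exact sub_le_sub_right (prod_erase_le_prod_erase_of_eq_one hi hj (fun k hk => (hfactor k hk).1)
    (fun k hk => (hfactor k hk).2) (by rw [hFj]; ring)) x

theorem stmt4_general (n : ℕ) (p : ℕ → ℝ)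
    (hp0 : 0 < p 1)
    (hmono : ∀ i j, 1 ≤ i → i ≤ j → j ≤ n → p i ≤ p j)
    (hpn : p n ≤ 1)
    (F : ℕ → ℝ → ℝ)
    -- each `F j` is a CDF on `[0,1]`
    (hF0 : ∀ j, 1 ≤ j → j ≤ n → ∀ x ∈ Set.Icc (0:ℝ) 1, 0 ≤ F j x ∧ F j x ≤ 1)
    (πstar : ℕ → ℝ)
    -- Nash equilibrium: no bid gives more than the equilibrium payoff …
    (hNE : ∀ i, 1 ≤ i → i ≤ n → ∀ x ∈ Set.Icc (0:ℝ) 1, payoff n p F i x ≤ πstar i)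
    -- … and each bidder attains its equilibrium payoff at the top of its support,
    -- a bid `b j` with `F j (b j) = 1`
    (hTop : ∀ j, 1 ≤ j → j ≤ n → ∃ b ∈ Set.Icc (0:ℝ) 1,
      F j b = 1 ∧ payoff n p F j b = πstar j) :
    ∀ i j, 1 ≤ i → i ≤ n → 1 ≤ j → j ≤ n → πstar i = πstar j := by
  have hp : ∀ k ∈ Icc 1 n, p k ∈ Set.Icc (0 : ℝ) 1 := fun k hk => by
    obtain ⟨hk1, hkn⟩ := mem_Icc.mp hk
    exact ⟨hp0.le.trans (hmono 1 k le_rfl hk1 hkn), (hmono k n hk1 hkn le_rfl).trans hpn⟩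
  have hle : ∀ i ∈ Icc 1 n, ∀ j ∈ Icc 1 n, πstar j ≤ πstar i := by
    intro i hi j hj
    obtain ⟨b, hb, hFb, hpay⟩ := hTop j (mem_Icc.mp hj).1 (mem_Icc.mp hj).2
    have hF : ∀ k ∈ Icc 1 n, F k b ∈ Set.Icc (0 : ℝ) 1 := fun k hk =>
      hF0 k (mem_Icc.mp hk).1 (mem_Icc.mp hk).2 b hb
    calc πstar j = payoff n p F j b := hpay.symm
      _ ≤ payoff n p F i b := payoff_le_payoff_of_eq_one hp hF hi hj hFb
      _ ≤ πstar i := hNE i (mem_Icc.mp hi).1 (mem_Icc.mp hi).2 b hb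
  intro i j hi1 hin hj1 hjn
  exact le_antisymm (hle j (mem_Icc.mpr ⟨hj1, hjn⟩) i (mem_Icc.mpr ⟨hi1, hin⟩))
    (hle i (mem_Icc.mpr ⟨hi1, hin⟩) j (mem_Icc.mpr ⟨hj1, hjn⟩))

theorem stmt4 (n : ℕ) (p : ℕ → ℝ) (hn : 2 ≤ n)
    (hp0 : 0 < p 1)
    (hmono : ∀ i j, 1 ≤ i → i ≤ j → j ≤ n → p i ≤ p j)
    (hpn1 : p (n - 1) < 1) (hpn : p n ≤ 1)
    (F : ℕ → ℝ → ℝ)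
    -- each `F j` is a CDF on `[0,1]`
    (hFmono : ∀ j, 1 ≤ j → j ≤ n → MonotoneOn (F j) (Set.Icc 0 1))
    (hF0 : ∀ j, 1 ≤ j → j ≤ n → ∀ x ∈ Set.Icc (0:ℝ) 1, 0 ≤ F j x ∧ F j x ≤ 1)
    (hF1 : ∀ j, 1 ≤ j → j ≤ n → F j 1 = 1)
    (πstar : ℕ → ℝ)
    -- Nash equilibrium: no bid gives more than the equilibrium payoff …
    (hNE : ∀ i, 1 ≤ i → i ≤ n → ∀ x ∈ Set.Icc (0:ℝ) 1, payoff n p F i x ≤ πstar i)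
    -- … and each bidder attains its equilibrium payoff at the top of its support,
    -- a bid `b j` with `F j (b j) = 1`
    (hTop : ∀ j, 1 ≤ j → j ≤ n → ∃ b ∈ Set.Icc (0:ℝ) 1,
      F j b = 1 ∧ payoff n p F j b = πstar j) :
    ∀ i j, 1 ≤ i → i ≤ n → 1 ≤ j → j ≤ n → πstar i = πstar j :=
  stmt4_general n p hp0 hmono hpn F hF0 πstar hNE hTop
end

section
/- Let n ≥ 2 and 0 < p_1 ≤ … ≤ p_n ≤ 1 with λ = ∏_{j=1}^{n-1}(1-p_j). For 1 ≤ i ≤ n-1, the equilibrium expected bid of bidder i equals E[bid_i] = (1/p_i)·( 1/n + Σ_{k=1}^{i} ( (1-p_k)^{n-k} ∏_{j=1}^{k}(1-p_j) ) / ((n-k)(n-k+1)) − ( (1-p_i)^{n-i} ∏_{j=1}^{i}(1-p_j) ) / (n-i) − p_i λ ), where E[bid_i] = Σ_{k=1}^{i} ∫_{s_k}^{s_{k-1}} x f_i(x) dx with f_i(x) = (λ+x)^{(k+1-n)/(n-k)} / ( p_i (n-k) (∏_{j=1}^{k-1}(1-p_j))^{1/(n-k)} ) on [s_k, s_{k-1}),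 and s_k = (1-p_k)^{n-k}∏_{j=1}^{k-1}(1-p_j) − λ, s_0 = 1 − λ. -/
/-!
On the `k`-th interval `[s_k, s_{k-1}]` the density is a constant multiple of `(λ + x) ^ (1/m - 1)`
with `m = n - k`, and both endpoints have the form `c ^ m * P - λ` with `c ≥ 0`, `P > 0`. After the
shift `u = λ + x` the integrand becomes `u ^ (1/m) - λ u ^ (1/m - 1)`, whose antiderivative
evaluated at `u = c ^ m * P` is again polynomial in `c`, because `(c ^ m * P) ^ (1/m) = c * P ^ (1/m)`.
Summing over `k`, the boundary value at `s_k` enters from the two adjacent pieces with the factors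
`1/(n-k)` and `-1/(n-k+1)`, whose sum gives the `k`-th term of the closed form, while the
`λ`-terms telescope to `λ p_i`.
-/

open Finset Real intervalIntegral

theorem mul_rpow_sub_one_eq_rpow (x : ℝ) {r : ℝ} (hr : r ≠ 0) : x * x ^ (r - 1) = x ^ r := by
  rcases eq_or_ne x 0 with rfl | hx
  · rw [zero_mul, zero_rpow hr]
  · rw [rpow_sub_one hx, mul_div_cancel₀ _ hx]

theorem integral_mul_add_rpow_sub_one {r : ℝ} (hr : 0 < r) (lam a b : ℝ) :
    ∫ x in a..b, x * (lam + x) ^ (r - 1) =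
      ((lam + b) ^ (r + 1) - (lam + a) ^ (r + 1)) / (r + 1)
        - lam * ((lam + b) ^ r - (lam + a) ^ r) / r := by
  have hsplit : ∀ u : ℝ, (u - lam) * u ^ (r - 1) = u ^ r - lam * u ^ (r - 1) := fun u => by
    rw [sub_mul, mul_rpow_sub_one_eq_rpow u hr.ne']
  calc ∫ x in a..b, x * (lam + x) ^ (r - 1)
      = ∫ x in a..b, ((lam + x) - lam) * (lam + x) ^ (r - 1) := by
        simp only [add_sub_cancel_left]
    _ = ∫ u in (lam + a)..(lam + b), (u ^ r - lam * u ^ (r - 1)) := by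
        simp only [hsplit, integral_comp_add_left (fun u => u ^ r - lam * u ^ (r - 1))]
    _ = _ := by
        rw [integral_sub (intervalIntegrable_rpow' (by linarith))
          ((intervalIntegrable_rpow' (by linarith)).const_mul lam), integral_const_mul,
          integral_rpow (Or.inl (by linarith)), integral_rpow (Or.inl (by linarith)),
          sub_add_cancel]
        ring

theorem pow_mul_rpow_inv_natCast {m : ℕ} (hm : m ≠ 0) {c P : ℝ} (hc : 0 ≤ c) (hP : 0 ≤ P) :
    (c ^ m * P) ^ (m⁻¹ : ℝ) = c * P ^ (m⁻¹ : ℝ) := by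
  rw [mul_rpow (by positivity) hP, pow_rpow_inv_natCast hc hm]

theorem integral_mul_rpow_inv_natCast_sub_one {m : ℕ} (hm : m ≠ 0) {P : ℝ} (hP : 0 < P)
    {a b : ℝ} (ha : 0 ≤ a) (hb : 0 ≤ b) (lam q : ℝ) :
    ∫ x in (a ^ m * P - lam)..(b ^ m * P - lam),
        x * ((lam + x) ^ ((m⁻¹ : ℝ) - 1) / (q * m * P ^ (m⁻¹ : ℝ)))
      = ((b ^ (m + 1) - a ^ (m + 1)) * P / (m + 1) - lam * (b - a)) / q := by
  have hm' : (0 : ℝ) < m := by positivity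
  have hPm : 0 < P ^ (m⁻¹ : ℝ) := rpow_pos_of_pos hP _
  have hpow : ∀ c, 0 ≤ c → (c ^ m * P) ^ ((m⁻¹ : ℝ) + 1) = c ^ (m + 1) * P * P ^ (m⁻¹ : ℝ) :=
    fun c hc => by
      rw [rpow_add_one' (by positivity) (by positivity), pow_mul_rpow_inv_natCast hm hc hP.le]
      ring
  simp only [mul_div_assoc', integral_div]
  rw [integral_mul_add_rpow_sub_one (inv_pos.mpr hm'), add_sub_cancel, add_sub_cancel,
    hpow a ha, hpow b hb, pow_mul_rpow_inv_natCast hm ha hP.le,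
    pow_mul_rpow_inv_natCast hm hb hP.le]
  field_simp
  ring

theorem sum_Icc_div_sub_telescope (A c : ℕ → ℝ) (lam : ℝ) {n i : ℕ} (hi : i < n) :
    ∑ k ∈ Icc 1 i, ((A (k - 1) - A k) / ((n : ℝ) - k + 1) - lam * (c (k - 1) - c k))
      = A 0 / n + ∑ k ∈ Icc 1 i, A k / (((n : ℝ) - k) * ((n : ℝ) - k + 1))
        - A i / ((n : ℝ) - i) - lam * (c 0 - c i) := by
  induction i with
  | zero => simp
  | succ i ih =>
    have hi' : (i : ℝ) + 1 < n := by exact_mod_cast hi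
    have h1 : (n : ℝ) - i ≠ 0 := by linarith
    have h2 : (n : ℝ) - (i + 1) ≠ 0 := by linarith
    rw [sum_Icc_succ_top (by omega), ih (by omega), sum_Icc_succ_top (by omega),
      Nat.add_sub_cancel]
    push_cast
    rw [show (n : ℝ) - (i + 1) + 1 = n - i by ring]
    field_simp
    ring

namespace AllPay

/-- `1 - p j`, with a fictitious bidder `0` who never participates, so that `s 0 + λ = 1`
fits the pattern `s k + λ = stay p k ^ (n - k) * ∏ j ∈ Icc 1 (k - 1), (1 - p j)`. -/
def stay (p : ℕ → ℝ) (j : ℕ) : ℝ := if j = 0 then 1 else 1 - p j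

def weight (p : ℕ → ℝ) (n k : ℕ) : ℝ := stay p k ^ (n - k) * ∏ j ∈ Icc 1 k, (1 - p j)

variable {p : ℕ → ℝ}

theorem stay_zero : stay p 0 = 1 := if_pos rfl

theorem stay_of_ne_zero {j : ℕ} (hj : j ≠ 0) : stay p j = 1 - p j := if_neg hj

theorem stay_nonneg {j : ℕ} (h : j ≠ 0 → p j ≤ 1) : 0 ≤ stay p j := by
  unfold stay
  split_ifs with hj
  · exact zero_le_one
  · linarith [h hj]

theorem stay_mul_prod_Icc_pred (j : ℕ) :
    stay p j * ∏ i ∈ Icc 1 (j - 1), (1 - p i) = ∏ i ∈ Icc 1 j, (1 - p i) := by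
  rcases j with _ | j
  · simp [stay_zero]
  · rw [prod_Icc_succ_top (by omega), stay_of_ne_zero j.succ_ne_zero, Nat.add_sub_cancel,
      mul_comm]

theorem weight_zero (n : ℕ) : weight p n 0 = 1 := by simp [weight, stay_zero]

theorem weight_of_ne_zero (n : ℕ) {k : ℕ} (hk : k ≠ 0) :
    weight p n k = (1 - p k) ^ (n - k) * ∏ j ∈ Icc 1 k, (1 - p j) := by
  rw [weight, stay_of_ne_zero hk]

variable {n : ℕ} {lam : ℝ} {s : ℕ → ℝ}

theorem add_eq_stay_pow_mul (hs0 : s 0 = 1 - lam)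
    (hsk : ∀ k, 1 ≤ k → k ≤ n - 1 →
      s k = (1 - p k) ^ (n - k) * ∏ j ∈ Icc 1 (k - 1), (1 - p j) - lam)
    {k : ℕ} (hk : k ≤ n - 1) :
    s k + lam = stay p k ^ (n - k) * ∏ j ∈ Icc 1 (k - 1), (1 - p j) := by
  rcases k with _ | k
  · simp [hs0, stay_zero]
  · rw [hsk _ k.succ_pos hk, stay_of_ne_zero k.succ_ne_zero, sub_add_cancel]

theorem integral_bid_piece (hs0 : s 0 = 1 - lam)
    (hsk : ∀ k, 1 ≤ k → k ≤ n - 1 →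
      s k = (1 - p k) ^ (n - k) * ∏ j ∈ Icc 1 (k - 1), (1 - p j) - lam)
    {k : ℕ} (hk1 : 1 ≤ k) (hk : k ≤ n - 1) (hp : ∀ j ∈ Icc 1 k, p j ≤ 1)
    (hP : 0 < ∏ j ∈ Icc 1 (k - 1), (1 - p j)) (q : ℝ) :
    ∫ x in (s k)..(s (k - 1)),
        x * ((lam + x) ^ (((k : ℝ) + 1 - n) / ((n : ℝ) - k)) /
          (q * ((n : ℝ) - k) * (∏ j ∈ Icc 1 (k - 1), (1 - p j)) ^ ((1 : ℝ) / ((n : ℝ) - k))))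
      = ((weight p n (k - 1) - weight p n k) / ((n : ℝ) - k + 1)
          - lam * (stay p (k - 1) - stay p k)) / q := by
  have hkn : k < n := by omega
  have hm : ((n - k : ℕ) : ℝ) = n - k := Nat.cast_sub hkn.le
  have hexp : ((k : ℝ) + 1 - n) / ((n : ℝ) - k) = ((n - k : ℕ) : ℝ)⁻¹ - 1 := by
    rw [hm]
    field_simp [sub_ne_zero.mpr (Nat.cast_lt.mpr hkn).ne']
    ring
  have hstay : ∀ j ≤ k, 0 ≤ stay p j := fun j hj =>
    stay_nonneg fun hj0 => hp j (mem_Icc.mpr ⟨Nat.one_le_iff_ne_zero.mpr hj0, hj⟩)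
  have hsucc : n - (k - 1) = n - k + 1 := by omega
  have hlow : s k = stay p k ^ (n - k) * ∏ j ∈ Icc 1 (k - 1), (1 - p j) - lam := by
    rw [← add_eq_stay_pow_mul hs0 hsk hk, add_sub_cancel_right]
  have hhigh : s (k - 1) = stay p (k - 1) ^ (n - k) * ∏ j ∈ Icc 1 (k - 1), (1 - p j) - lam := by
    rw [← stay_mul_prod_Icc_pred, ← mul_assoc, ← pow_succ, ← hsucc,
      ← add_eq_stay_pow_mul hs0 hsk (by omega : k - 1 ≤ n - 1), add_sub_cancel_right]
  rw [hexp, one_div, ← hm, hlow, hhigh, integral_mul_rpow_inv_natCast_sub_one (by omega) hP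
    (hstay k le_rfl) (hstay (k - 1) (Nat.sub_le k 1)), weight, weight, hsucc,
    ← stay_mul_prod_Icc_pred k, hm]
  ring

end AllPay

open AllPay

theorem stmt6_general (n : ℕ) (p : ℕ → ℝ)
    (hmono : ∀ i j, 1 ≤ i → i ≤ j → j ≤ n → p i ≤ p j)
    (hpn : p n ≤ 1)
    (lam : ℝ)
    (s : ℕ → ℝ) (hs0 : s 0 = 1 - lam)
    (hsk : ∀ k, 1 ≤ k → k ≤ n - 1 →
      s k = (1 - p k) ^ (n - k) * ∏ j ∈ Finset.Icc 1 (k - 1), (1 - p j) - lam)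
    (i : ℕ) (hi1 : 1 ≤ i) (hi2 : i ≤ n - 1)
    (hprod : ∀ k, 1 ≤ k → k ≤ i → 0 < ∏ j ∈ Finset.Icc 1 (k - 1), (1 - p j)) :
    ∑ k ∈ Finset.Icc 1 i, ∫ x in (s k)..(s (k - 1)),
        x * ((lam + x) ^ (((k : ℝ) + 1 - n) / ((n : ℝ) - k)) /
          (p i * ((n : ℝ) - k) *
            (∏ j ∈ Finset.Icc 1 (k - 1), (1 - p j)) ^ ((1 : ℝ) / ((n : ℝ) - k))))
      = (1 / p i) *
        (1 / n
          + (∑ k ∈ Finset.Icc 1 i,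
              ((1 - p k) ^ (n - k) * ∏ j ∈ Finset.Icc 1 k, (1 - p j)) /
                (((n : ℝ) - k) * ((n : ℝ) - k + 1)))
          - ((1 - p i) ^ (n - i) * ∏ j ∈ Finset.Icc 1 i, (1 - p j)) / ((n : ℝ) - i)
          - p i * lam) := by
  have hp : ∀ j ∈ Icc 1 i, p j ≤ 1 := fun j hj =>
    (hmono j n (mem_Icc.mp hj).1 (by grind) le_rfl).trans hpn
  have hpiece : ∀ k ∈ Icc 1 i, _ := fun k hk => by
    obtain ⟨hk1, hki⟩ := mem_Icc.mp hk
    exact integral_bid_piece hs0 hsk hk1 (hki.trans hi2) (fun j hj => hp j (by grind))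
      (hprod k hk1 hki) (p i)
  rw [sum_congr rfl hpiece, ← sum_div, sum_Icc_div_sub_telescope _ _ lam (by omega : i < n),
    sum_congr rfl fun k hk => by rw [weight_of_ne_zero n (by grind : k ≠ 0)], weight_zero,
    weight_of_ne_zero n (by omega : i ≠ 0), stay_zero, stay_of_ne_zero (by omega : i ≠ 0)]
  ring

theorem stmt6 (n : ℕ) (p : ℕ → ℝ) (hn : 2 ≤ n)
    (hp0 : 0 < p 1)
    (hmono : ∀ i j, 1 ≤ i → i ≤ j → j ≤ n → p i ≤ p j)
    (hpn : p n ≤ 1)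
    (lam : ℝ) (hlam : lam = ∏ j ∈ Finset.Icc 1 (n - 1), (1 - p j))
    (s : ℕ → ℝ) (hs0 : s 0 = 1 - lam)
    (hsk : ∀ k, 1 ≤ k → k ≤ n - 1 →
      s k = (1 - p k) ^ (n - k) * ∏ j ∈ Finset.Icc 1 (k - 1), (1 - p j) - lam)
    (i : ℕ) (hi1 : 1 ≤ i) (hi2 : i ≤ n - 1)
    (hprod : ∀ k, 1 ≤ k → k ≤ i → 0 < ∏ j ∈ Finset.Icc 1 (k - 1), (1 - p j)) :
    ∑ k ∈ Finset.Icc 1 i, ∫ x in (s k)..(s (k - 1)),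
        x * ((lam + x) ^ (((k : ℝ) + 1 - n) / ((n : ℝ) - k)) /
          (p i * ((n : ℝ) - k) *
            (∏ j ∈ Finset.Icc 1 (k - 1), (1 - p j)) ^ ((1 : ℝ) / ((n : ℝ) - k))))
      = (1 / p i) *
        (1 / n
          + (∑ k ∈ Finset.Icc 1 i,
              ((1 - p k) ^ (n - k) * ∏ j ∈ Finset.Icc 1 k, (1 - p j)) /
                (((n : ℝ) - k) * ((n : ℝ) - k + 1)))
          - ((1 - p i) ^ (n - i) * ∏ j ∈ Finset.Icc 1 i, (1 - p j)) / ((n : ℝ) - i)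
          - p i * lam) :=
  stmt6_general n p hmono hpn lam s hs0 hsk i hi1 hi2 hprod
end

section
/- Let n ≥ 2 and 0 < p_1 ≤ … ≤ p_n ≤ 1 with λ = ∏_{j=1}^{n-1}(1-p_j), and let E[bid_i] denote the equilibrium expected bids as in the paper's Theorem 4 (with E[bid_n] = (p_{n-1}/p_n) E[bid_{n-1}]). Then the sum-profit auctioneer's expected revenue satisfies Σ_{i=1}^{n} p_i E[bid_i] = 1 − λ(1 + Σ_{i=1}^{n-1} p_i). -/
/-!
Write `c k = (1 - p k) ^ (n - k) * ∏ j ≤ k, (1 - p j)`. Since `p n E[bid n] = p (n-1) E[bid (n-1)]`,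
the revenue is `∑_{i<n} p i E[bid i]` plus its last term once more. Exchanging the double sum, the
term `c k / ((n - k) (n - k + 1))` occurs `n - k + 1` times, so these terms cancel against the
`- c i / (n - i)`, except for the repeated `- c (n-1) = - (1 - p (n-1)) λ`, which together with the
extra `- p (n-1) λ` gives `- λ`; the `n` copies of `1 / n` give `1`.
-/

open Finset

lemma sum_Icc_sum_Icc_eq_sum_smul {M : Type*} [AddCommMonoid M] (g : ℕ → M) (m : ℕ) :
    ∑ i ∈ Icc 1 m, ∑ k ∈ Icc 1 i, g k = ∑ k ∈ Icc 1 m, (m + 1 - k) • g k := by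
  rw [sum_comm' (t' := Icc 1 m) (s' := fun k => Icc k m) (by intro i k; simp only [mem_Icc]; omega)]
  simp [Nat.card_Icc]

lemma sum_partial_sums_add_sum (c : ℕ → ℝ) (n : ℕ) :
    ∑ i ∈ Icc 1 (n - 1), ∑ k ∈ Icc 1 i, c k / (((n : ℝ) - k) * ((n : ℝ) - k + 1))
      + ∑ k ∈ Icc 1 (n - 1), c k / (((n : ℝ) - k) * ((n : ℝ) - k + 1))
      = ∑ k ∈ Icc 1 (n - 1), c k / ((n : ℝ) - k) := by
  rw [sum_Icc_sum_Icc_eq_sum_smul, ← sum_add_distrib]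
  refine sum_congr rfl fun k hk => ?_
  have hkn : k < n := by simp only [mem_Icc] at hk; omega
  have hcount : ((n - 1 + 1 - k : ℕ) : ℝ) = n - k := by
    rw [Nat.sub_add_cancel (by omega), Nat.cast_sub hkn.le]
  have hpos : (0 : ℝ) < n - k + 1 := by
    have : (k : ℝ) < n := by exact_mod_cast hkn
    linarith
  rw [nsmul_eq_mul, hcount]
  field_simp

/-- `p i * E[bid i]` for `i ≤ n - 1`, in terms of `c` and `q = p`. -/
noncomputable def revenueShare (n : ℕ) (c q : ℕ → ℝ) (lam : ℝ) (i : ℕ) : ℝ :=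
  1 / n + ∑ k ∈ Icc 1 i, c k / (((n : ℝ) - k) * ((n : ℝ) - k + 1))
    - c i / ((n : ℝ) - i) - q i * lam

lemma sum_revenueShare_add_last (n : ℕ) (hn : 2 ≤ n) (c q : ℕ → ℝ) (lam : ℝ)
    (hc : c (n - 1) = (1 - q (n - 1)) * lam) :
    ∑ i ∈ Icc 1 (n - 1), revenueShare n c q lam i + revenueShare n c q lam (n - 1)
      = 1 - lam * (1 + ∑ i ∈ Icc 1 (n - 1), q i) := by
  have hlast : (n : ℝ) - ((n - 1 : ℕ) : ℝ) = 1 := by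
    rw [Nat.cast_sub (by omega)]; ring
  have hcard : ((n - 1 + 1 - 1 : ℕ) : ℝ) = n - 1 := by
    rw [Nat.add_sub_cancel, Nat.cast_sub (by omega), Nat.cast_one]
  have hn0 : (n : ℝ) ≠ 0 := by positivity
  simp only [revenueShare, sum_sub_distrib, sum_add_distrib, sum_const, Nat.card_Icc,
    nsmul_eq_mul, ← sum_mul, hlast, div_one, hc, hcard]
  linear_combination sum_partial_sums_add_sum c n + mul_inv_cancel₀ hn0

theorem stmt7_general (n : ℕ) (p : ℕ → ℝ) (hn : 2 ≤ n)
    (hp0 : 0 < p 1)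
    (hmono : ∀ i j, 1 ≤ i → i ≤ j → j ≤ n → p i ≤ p j)
    (lam : ℝ) (hlam : lam = ∏ j ∈ Finset.Icc 1 (n - 1), (1 - p j))
    (E : ℕ → ℝ)
    (hE : ∀ i, 1 ≤ i → i ≤ n - 1 →
      E i = (1 / p i) *
        (1 / n
          + (∑ k ∈ Finset.Icc 1 i,
              ((1 - p k) ^ (n - k) * ∏ j ∈ Finset.Icc 1 k, (1 - p j)) /
                (((n : ℝ) - k) * ((n : ℝ) - k + 1)))
          - ((1 - p i) ^ (n - i) * ∏ j ∈ Finset.Icc 1 i, (1 - p j)) / ((n : ℝ) - i)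
          - p i * lam))
    (hEn : E n = (p (n - 1) / p n) * E (n - 1)) :
    ∑ i ∈ Finset.Icc 1 n, p i * E i = 1 - lam * (1 + ∑ i ∈ Finset.Icc 1 (n - 1), p i) := by
  set c : ℕ → ℝ := fun k => (1 - p k) ^ (n - k) * ∏ j ∈ Icc 1 k, (1 - p j)
  have hp_ne : ∀ i, 1 ≤ i → i ≤ n → p i ≠ 0 := fun i hi hin =>
    (hp0.trans_le (hmono 1 i le_rfl hi hin)).ne'
  have hshare : ∀ i ∈ Icc 1 (n - 1), p i * E i = revenueShare n c p lam i := by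
    intro i hi
    rw [mem_Icc] at hi
    rw [hE i hi.1 hi.2, ← mul_assoc, mul_one_div_cancel (hp_ne i hi.1 (by omega)), one_mul]
    rfl
  have hlastE : p n * E n = p (n - 1) * E (n - 1) := by
    rw [hEn]; field_simp [hp_ne n (by omega) le_rfl]
  have hc : c (n - 1) = (1 - p (n - 1)) * lam := by
    simp only [c, hlam, Nat.sub_sub_self (by omega : 1 ≤ n), pow_one]
  have hsplit := sum_Icc_succ_top (show 1 ≤ n - 1 + 1 by omega) (fun i => p i * E i)
  rw [Nat.sub_add_cancel (by omega)] at hsplit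
  rw [hsplit, hlastE, hshare (n - 1) (by simp only [mem_Icc]; omega), sum_congr rfl hshare]
  exact sum_revenueShare_add_last n hn c p lam hc

theorem stmt7 (n : ℕ) (p : ℕ → ℝ) (hn : 2 ≤ n)
    (hp0 : 0 < p 1)
    (hmono : ∀ i j, 1 ≤ i → i ≤ j → j ≤ n → p i ≤ p j)
    (hpn : p n ≤ 1)
    (lam : ℝ) (hlam : lam = ∏ j ∈ Finset.Icc 1 (n - 1), (1 - p j))
    (E : ℕ → ℝ)
    (hE : ∀ i, 1 ≤ i → i ≤ n - 1 →
      E i = (1 / p i) *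
        (1 / n
          + (∑ k ∈ Finset.Icc 1 i,
              ((1 - p k) ^ (n - k) * ∏ j ∈ Finset.Icc 1 k, (1 - p j)) /
                (((n : ℝ) - k) * ((n : ℝ) - k + 1)))
          - ((1 - p i) ^ (n - i) * ∏ j ∈ Finset.Icc 1 i, (1 - p j)) / ((n : ℝ) - i)
          - p i * lam))
    (hEn : E n = (p (n - 1) / p n) * E (n - 1)) :
    ∑ i ∈ Finset.Icc 1 n, p i * E i = 1 - lam * (1 + ∑ i ∈ Finset.Icc 1 (n - 1), p i) :=
  stmt7_general n p hn hp0 hmono lam hlam E hE hEn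
end

section
/- Let n ≥ 2 and 0 < p_1 ≤ … ≤ p_n ≤ 1 with λ = ∏_{j=1}^{n-1}(1-p_j). Define G(x) piecewise on [0, 1-λ] by G(x) = (λ+x)^{(n-k+1)/(n-k)} / (∏_{j=1}^{k-1}(1-p_j))^{1/(n-k)} for x ∈ [s_k, s_{k-1}), where s_k = (1-p_k)^{n-k}∏_{j=1}^{k-1}(1-p_j) − λ and s_0 = 1−λ. Then ∫_{0}^{1-λ} x G'(x) dx = n/(2n−1) − λ + Σ_{k=1}^{n-1} ( (1-p_k)^{2n-2k-1} ∏_{j=1}^{k}(1-p_j)^2 ) / (4(n-k)^2 − 1). -/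
/-!
On the `k`-th piece put `m = n - k`, `Q = ∏_{j<k} (1 - p_j)` and substitute `x = y ^ m Q - λ`:
the piece runs from `y = 1 - p_k` to `y = 1 - p_{k-1}` and the integrand becomes the polynomial
`(m + 1) (y ^ m Q - λ) y ^ m Q`. Splitting the resulting coefficient `(m + 1)/(2m + 1)` as
`m/(2m - 1) - 1/(4m² - 1)`, the piece values telescope; what is split off is the sum on the right,
and the `λ`-terms telescope to `-λ`. With the convention `1 - p_0 = 1` the first piece, which ends
at `s_0 = 1 - λ`, is an instance of the general one.
-/

open Finset

theorem integral_mul_rpow_pow_mul_sub (m : ℕ) (hm : m ≠ 0) {Q : ℝ} (hQ : 0 < Q) (lam : ℝ)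
    {a b : ℝ} (ha : 0 ≤ a) (hb : 0 ≤ b) :
    ∫ x in (a ^ m * Q - lam)..(b ^ m * Q - lam),
        x * (((m : ℝ) + 1) / m * (lam + x) ^ ((1 : ℝ) / m) / Q ^ ((1 : ℝ) / m))
      = ((m : ℝ) + 1) / (2 * m + 1) * (b ^ (2 * m + 1) - a ^ (2 * m + 1)) * Q ^ 2
        - lam * (b ^ (m + 1) - a ^ (m + 1)) * Q := by
  obtain ⟨j, rfl⟩ := Nat.exists_eq_succ_of_ne_zero hm
  rw [← intervalIntegral.integral_comp_mul_deriv (f := fun y => y ^ (j + 1) * Q - lam)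
      (f' := fun y => (j + 1 : ℕ) * y ^ j * Q)
      (fun y _ => by simpa using ((hasDerivAt_pow (j + 1) y).mul_const Q).sub_const lam)
      (by fun_prop) (by fun_prop (disch := positivity)),
    intervalIntegral.integral_congr (g := fun y =>
      ((j + 1 : ℕ) + 1 : ℝ) * Q ^ 2 * y ^ (2 * (j + 1))
        - ((j + 1 : ℕ) + 1 : ℝ) * lam * Q * y ^ (j + 1))
      fun y hy => ?substituted]
  case substituted =>
    have hy : 0 ≤ y := by rcases Set.mem_uIcc.mp hy with h | h <;> linarith [h.1]
    have hroot :
        (y ^ (j + 1) * Q) ^ ((1 : ℝ) / (j + 1 : ℕ)) = y * Q ^ ((1 : ℝ) / (j + 1 : ℕ)) := by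
      rw [Real.mul_rpow (by positivity) hQ.le, one_div, Real.pow_rpow_inv_natCast hy j.succ_ne_zero]
    simp only [Function.comp_apply, add_sub_cancel, hroot]
    field_simp
    ring
  rw [intervalIntegral.integral_sub, intervalIntegral.integral_const_mul,
    intervalIntegral.integral_const_mul, integral_pow, integral_pow]
  · push_cast
    field_simp
  all_goals exact (continuous_const.mul (continuous_pow _)).intervalIntegrable _ _

theorem sum_Icc_one_pred_sub (f : ℕ → ℝ) (N : ℕ) :
    ∑ k ∈ Icc 1 N, (f (k - 1) - f k) = f 0 - f N := by
  rcases N.eq_zero_or_pos with rfl | hN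
  · simp
  simpa [add_comm, sub_eq_add_neg] using sum_Icc_sub (f := fun i => -f (i - 1)) hN

noncomputable def prefixProd (r : ℕ → ℝ) (k : ℕ) : ℝ := ∏ j ∈ Icc 1 k, r j

theorem prefixProd_eq_mul {r : ℕ → ℝ} (hr0 : r 0 = 1) (k : ℕ) :
    prefixProd r k = prefixProd r (k - 1) * r k := by
  cases k with
  | zero => simp [prefixProd, hr0]
  | succ k => simp [prefixProd, prod_Icc_succ_top]

/- With `m = n - k` and `r = 1 - p`, `λ + s_k = r_k ^ m Q_{k-1}`; then `cdfAtBreak` is `G(s_k)`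
and `weightedCdfAtBreak` is `m/(2m - 1) (λ + s_k) G(s_k)`. -/
noncomputable def cdfAtBreak (n : ℕ) (r : ℕ → ℝ) (k : ℕ) : ℝ :=
  r k ^ (n - k + 1) * prefixProd r (k - 1)

noncomputable def weightedCdfAtBreak (n : ℕ) (r : ℕ → ℝ) (k : ℕ) : ℝ :=
  ((n : ℝ) - k) / (2 * ((n : ℝ) - k) - 1) * r k ^ (2 * (n - k) + 1) * prefixProd r (k - 1) ^ 2

theorem cdfAtBreak_zero {n : ℕ} {r : ℕ → ℝ} (hr0 : r 0 = 1) : cdfAtBreak n r 0 = 1 := by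
  simp [cdfAtBreak, prefixProd, hr0]

theorem weightedCdfAtBreak_zero {n : ℕ} {r : ℕ → ℝ} (hr0 : r 0 = 1) :
    weightedCdfAtBreak n r 0 = n / (2 * n - 1) := by
  simp [weightedCdfAtBreak, prefixProd, hr0]

theorem piece_eq_telescoping {n k : ℕ} (hk : 1 ≤ k) (hkn : k < n) {r : ℕ → ℝ}
    (hr0 : r 0 = 1) (lam : ℝ) :
    (((n - k : ℕ) : ℝ) + 1) / (2 * ((n - k : ℕ) : ℝ) + 1)
          * (r (k - 1) ^ (2 * (n - k) + 1) - r k ^ (2 * (n - k) + 1)) * prefixProd r (k - 1) ^ 2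
        - lam * (r (k - 1) ^ (n - k + 1) - r k ^ (n - k + 1)) * prefixProd r (k - 1)
      = (weightedCdfAtBreak n r (k - 1) - weightedCdfAtBreak n r k)
        + r k ^ (2 * n - 2 * k - 1) * prefixProd r k ^ 2 / (4 * ((n : ℝ) - k) ^ 2 - 1)
        - lam * (cdfAtBreak n r (k - 1) - cdfAtBreak n r k) := by
  obtain ⟨j, rfl⟩ : ∃ j, k = j + 1 := ⟨k - 1, by omega⟩
  obtain ⟨i, rfl⟩ : ∃ i, n = j + 1 + i + 1 := ⟨n - (j + 1) - 1, by omega⟩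
  simp only [weightedCdfAtBreak, cdfAtBreak, prefixProd_eq_mul hr0 (j + 1),
    show j + 1 + i + 1 - (j + 1) = i + 1 by omega, show j + 1 + i + 1 - j = i + 2 by omega,
    show 2 * (j + 1 + i + 1) - 2 * (j + 1) - 1 = 2 * i + 1 by omega, Nat.add_sub_cancel]
  rw [prefixProd_eq_mul hr0 j]
  push_cast
  rw [show (j : ℝ) + 1 + i + 1 - j = i + 2 by ring,
    show (j : ℝ) + 1 + i + 1 - (j + 1) = i + 1 by ring,
    show 2 * ((i : ℝ) + 2) - 1 = 2 * (i + 1) + 1 by ring,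
    show 4 * ((i : ℝ) + 1) ^ 2 - 1 = (2 * i + 1) * (2 * (i + 1) + 1) by ring,
    show 2 * ((i : ℝ) + 1) - 1 = 2 * i + 1 by ring]
  field_simp
  ring

theorem weightedCdfAtBreak_pred_self {n : ℕ} (hn : 1 ≤ n) {r : ℕ → ℝ} (hr0 : r 0 = 1) :
    weightedCdfAtBreak n r (n - 1) = prefixProd r (n - 1) * cdfAtBreak n r (n - 1) := by
  obtain ⟨i, rfl⟩ : ∃ i, n = i + 1 := ⟨n - 1, by omega⟩
  simp only [weightedCdfAtBreak, cdfAtBreak, Nat.add_sub_cancel, prefixProd_eq_mul hr0 i,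
    show i + 1 - i = 1 by omega]
  push_cast
  ring

theorem sum_pieces_eq {n : ℕ} (hn : 1 ≤ n) {r : ℕ → ℝ} (hr0 : r 0 = 1) :
    ∑ k ∈ Icc 1 (n - 1),
        ((((n - k : ℕ) : ℝ) + 1) / (2 * ((n - k : ℕ) : ℝ) + 1)
            * (r (k - 1) ^ (2 * (n - k) + 1) - r k ^ (2 * (n - k) + 1)) * prefixProd r (k - 1) ^ 2
          - prefixProd r (n - 1) * (r (k - 1) ^ (n - k + 1) - r k ^ (n - k + 1))
            * prefixProd r (k - 1))
      = (n : ℝ) / (2 * n - 1) - prefixProd r (n - 1)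
        + ∑ k ∈ Icc 1 (n - 1),
            r k ^ (2 * n - 2 * k - 1) * prefixProd r k ^ 2 / (4 * ((n : ℝ) - k) ^ 2 - 1) := by
  rw [sum_congr rfl fun k hk => piece_eq_telescoping (mem_Icc.1 hk).1 (by grind) hr0 _,
    sum_sub_distrib, sum_add_distrib, sum_Icc_one_pred_sub, ← mul_sum, sum_Icc_one_pred_sub,
    weightedCdfAtBreak_pred_self hn hr0, weightedCdfAtBreak_zero hr0, cdfAtBreak_zero hr0]
  ring

theorem sum_integral_pieces_eq {n : ℕ} (hn : 1 ≤ n) {r : ℕ → ℝ} (hr0 : r 0 = 1)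
    (hr : ∀ k < n, 0 ≤ r k) (hQ : ∀ k ∈ Icc 1 (n - 1), 0 < prefixProd r (k - 1))
    {s : ℕ → ℝ}
    (hs : ∀ k ≤ n - 1, s k = r k ^ (n - k) * prefixProd r (k - 1) - prefixProd r (n - 1)) :
    ∑ k ∈ Icc 1 (n - 1), ∫ x in (s k)..(s (k - 1)),
        x * ((((n : ℝ) - k + 1) / ((n : ℝ) - k))
          * (prefixProd r (n - 1) + x) ^ ((1 : ℝ) / ((n : ℝ) - k))
          / prefixProd r (k - 1) ^ ((1 : ℝ) / ((n : ℝ) - k)))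
      = (n : ℝ) / (2 * n - 1) - prefixProd r (n - 1)
        + ∑ k ∈ Icc 1 (n - 1),
            r k ^ (2 * n - 2 * k - 1) * prefixProd r k ^ 2 / (4 * ((n : ℝ) - k) ^ 2 - 1) := by
  rw [← sum_pieces_eq hn hr0]
  refine sum_congr rfl fun k hk => ?_
  obtain ⟨hk1, hkn⟩ := mem_Icc.1 hk
  have hupper : s (k - 1) = r (k - 1) ^ (n - k) * prefixProd r (k - 1) - prefixProd r (n - 1) := by
    rw [hs (k - 1) (by omega), prefixProd_eq_mul hr0 (k - 1), show n - (k - 1) = n - k + 1 by omega]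
    ring
  rw [hs k hkn, hupper, show (n : ℝ) - k = ((n - k : ℕ) : ℝ) by rw [Nat.cast_sub (by omega)],
    integral_mul_rpow_pow_mul_sub (n - k) (by omega) (hQ k hk) _ (hr k (by omega))
      (hr (k - 1) (by omega))]

theorem stmt8_general (n : ℕ) (p : ℕ → ℝ) (hn : 2 ≤ n)
    (hmono : ∀ i j, 1 ≤ i → i ≤ j → j ≤ n → p i ≤ p j)
    (hpn : p n ≤ 1)
    (lam : ℝ) (hlam : lam = ∏ j ∈ Finset.Icc 1 (n - 1), (1 - p j))
    (s : ℕ → ℝ) (hs0 : s 0 = 1 - lam)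
    (hsk : ∀ k, 1 ≤ k → k ≤ n - 1 →
      s k = (1 - p k) ^ (n - k) * ∏ j ∈ Finset.Icc 1 (k - 1), (1 - p j) - lam)
    (hprod : ∀ k, 1 ≤ k → k ≤ n - 1 → 0 < ∏ j ∈ Finset.Icc 1 (k - 1), (1 - p j)) :
    -- the integral ∫₀^{1-λ} x G'(x) dx, computed piecewise: on [s_k, s_{k-1}) the
    -- derivative of G(x) = (λ+x)^{(n-k+1)/(n-k)} / (∏_{j<k}(1-p_j))^{1/(n-k)} is
    -- ((n-k+1)/(n-k)) (λ+x)^{1/(n-k)} / (∏_{j<k}(1-p_j))^{1/(n-k)}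
    ∑ k ∈ Finset.Icc 1 (n - 1), ∫ x in (s k)..(s (k - 1)),
        x * ((((n : ℝ) - k + 1) / ((n : ℝ) - k)) * (lam + x) ^ ((1 : ℝ) / ((n : ℝ) - k)) /
          (∏ j ∈ Finset.Icc 1 (k - 1), (1 - p j)) ^ ((1 : ℝ) / ((n : ℝ) - k)))
      = (n : ℝ) / (2 * n - 1) - lam
          + ∑ k ∈ Finset.Icc 1 (n - 1),
              ((1 - p k) ^ (2 * n - 2 * k - 1) * ∏ j ∈ Finset.Icc 1 k, (1 - p j) ^ 2) /
                (4 * ((n : ℝ) - k) ^ 2 - 1) := by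
  set r : ℕ → ℝ := fun j => if j = 0 then 1 else 1 - p j
  have hr0 : r 0 = 1 := if_pos rfl
  have hr_pos : ∀ k, 1 ≤ k → r k = 1 - p k := fun k hk => if_neg (by omega)
  have hQ : ∀ k, ∏ j ∈ Icc 1 k, (1 - p j) = prefixProd r k :=
    fun k => prod_congr rfl fun j hj => (hr_pos j (mem_Icc.1 hj).1).symm
  subst hlam
  simp only [hQ] at hs0 hsk hprod ⊢
  rw [sum_integral_pieces_eq (by omega) hr0 ?nonneg
    (fun k hk => hprod k (mem_Icc.1 hk).1 (mem_Icc.1 hk).2) ?breaks]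
  · refine congrArg _ (sum_congr rfl fun k hk => ?_)
    rw [prod_pow, hQ, hr_pos k (mem_Icc.1 hk).1]
  case nonneg =>
    intro k hk
    rcases k.eq_zero_or_pos with rfl | hk1
    · rw [hr0]; exact zero_le_one
    · rw [hr_pos k hk1]; linarith [hmono k n hk1 hk.le le_rfl]
  case breaks =>
    intro k hk
    rcases k.eq_zero_or_pos with rfl | hk1
    · simp [hs0, hr0, prefixProd]
    · rw [hsk k hk1 hk, hr_pos k hk1]

theorem stmt8 (n : ℕ) (p : ℕ → ℝ) (hn : 2 ≤ n)
    (hp0 : 0 < p 1)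
    (hmono : ∀ i j, 1 ≤ i → i ≤ j → j ≤ n → p i ≤ p j)
    (hpn : p n ≤ 1)
    (lam : ℝ) (hlam : lam = ∏ j ∈ Finset.Icc 1 (n - 1), (1 - p j))
    (s : ℕ → ℝ) (hs0 : s 0 = 1 - lam)
    (hsk : ∀ k, 1 ≤ k → k ≤ n - 1 →
      s k = (1 - p k) ^ (n - k) * ∏ j ∈ Finset.Icc 1 (k - 1), (1 - p j) - lam)
    (hprod : ∀ k, 1 ≤ k → k ≤ n - 1 → 0 < ∏ j ∈ Finset.Icc 1 (k - 1), (1 - p j)) :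
    -- the integral ∫₀^{1-λ} x G'(x) dx, computed piecewise: on [s_k, s_{k-1}) the
    -- derivative of G(x) = (λ+x)^{(n-k+1)/(n-k)} / (∏_{j<k}(1-p_j))^{1/(n-k)} is
    -- ((n-k+1)/(n-k)) (λ+x)^{1/(n-k)} / (∏_{j<k}(1-p_j))^{1/(n-k)}
    ∑ k ∈ Finset.Icc 1 (n - 1), ∫ x in (s k)..(s (k - 1)),
        x * ((((n : ℝ) - k + 1) / ((n : ℝ) - k)) * (lam + x) ^ ((1 : ℝ) / ((n : ℝ) - k)) /
          (∏ j ∈ Finset.Icc 1 (k - 1), (1 - p j)) ^ ((1 : ℝ) / ((n : ℝ) - k)))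
      = (n : ℝ) / (2 * n - 1) - lam
          + ∑ k ∈ Finset.Icc 1 (n - 1),
              ((1 - p k) ^ (2 * n - 2 * k - 1) * ∏ j ∈ Finset.Icc 1 k, (1 - p j) ^ 2) /
                (4 * ((n : ℝ) - k) ^ 2 - 1) :=
  stmt8_general n p hn hmono hpn lam hlam s hs0 hsk hprod
end

section
/- Let n ≥ 2 be an integer and p ∈ (0,1]. With λ = (1-p)^{n-1} and f(x) = (λ+x)^{(2-n)/(n-1)}/(p(n-1)) on [0, 1−λ], one has ∫_0^{1-λ} x² f(x) dx = (1/p)·( 1/(2n−1) − (2/n)(1-p)^{n-1} + (1-p)^{2n-2} − (1-p)^{2n-1}·2(n-1)²/(n(2n−1)) ), and consequently the variance of a bidder's bid equals (1 − (1-p)^{2n-1})/((2n−1)p) − (1 − (1-p)^n)²/(n²p²). -/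
/-!
Substituting `u = λ + x` turns the second moment into `∫_λ^1 (u - λ)² u^a du` with
`a = (2 - n)/(n - 1) > -1`; expanding the square leaves three power functions, integrated by the
power rule. Because `λ = (1 - p)^(n-1)` and `a + 1, a + 2, a + 3` are `1, n, 2n - 1` divided by
`n - 1`, the boundary terms `λ^(a+j)` are integral powers of `1 - p`, and both identities become
rational-function identities in `p`, `n` and `(1 - p)^(n-1)`.
-/

open intervalIntegral Real

lemma sub_sq_mul_rpow {u a : ℝ} (hu : 0 ≤ u) (ha : -1 < a) (c : ℝ) :
    (u - c) ^ 2 * u ^ a = u ^ (a + 2) - 2 * c * u ^ (a + 1) + c ^ 2 * u ^ a := by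
  rw [show a + 2 = a + 1 + 1 by ring, rpow_add_one' hu (by linarith),
    rpow_add_one' hu (by linarith)]
  ring

lemma integral_sub_sq_mul_rpow {a c b : ℝ} (ha : -1 < a) (hc : 0 ≤ c) (hb : 0 ≤ b) :
    ∫ u in c..b, (u - c) ^ 2 * u ^ a
      = (b ^ (a + 3) - c ^ (a + 3)) / (a + 3) - 2 * c * ((b ^ (a + 2) - c ^ (a + 2)) / (a + 2))
        + c ^ 2 * ((b ^ (a + 1) - c ^ (a + 1)) / (a + 1)) := by
  have hpos : ∀ u ∈ Set.uIcc c b, 0 ≤ u := fun u hu => (le_min hc hb).trans hu.1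
  have ha1 : -1 < a + 1 := by linarith
  have ha2 : -1 < a + 2 := by linarith
  rw [integral_congr fun u hu => sub_sq_mul_rpow (hpos u hu) ha c,
    integral_add (((intervalIntegrable_rpow' ha2).sub
        ((intervalIntegrable_rpow' ha1).const_mul _)))
      ((intervalIntegrable_rpow' ha).const_mul _),
    integral_sub (intervalIntegrable_rpow' ha2) ((intervalIntegrable_rpow' ha1).const_mul _),
    integral_const_mul, integral_const_mul, integral_rpow (Or.inl ha2),
    integral_rpow (Or.inl ha1), integral_rpow (Or.inl ha)]
  ring_nf

lemma integral_sq_mul_add_rpow {a c b : ℝ} (ha : -1 < a) (hc : 0 ≤ c) (hb : 0 ≤ b) :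
    ∫ x in (0 : ℝ)..(b - c), x ^ 2 * (c + x) ^ a
      = (b ^ (a + 3) - c ^ (a + 3)) / (a + 3) - 2 * c * ((b ^ (a + 2) - c ^ (a + 2)) / (a + 2))
        + c ^ 2 * ((b ^ (a + 1) - c ^ (a + 1)) / (a + 1)) := by
  rw [← integral_sub_sq_mul_rpow ha hc hb, ← add_zero c, ← add_sub_cancel c b,
    ← integral_comp_add_left]
  simp

lemma pow_rpow_div_natCast {q : ℝ} (hq : 0 ≤ q) {m : ℕ} (hm : m ≠ 0) (k : ℕ) :
    (q ^ m) ^ ((k : ℝ) / m) = q ^ k := by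
  rw [← rpow_natCast_mul hq, mul_div_cancel₀ _ (by exact_mod_cast hm), rpow_natCast]

lemma integral_sq_mul_pow_add_rpow {q : ℝ} (hq : 0 ≤ q) {k : ℕ} (hk : k ≠ 0) :
    ∫ x in (0 : ℝ)..(1 - q ^ k), x ^ 2 * (q ^ k + x) ^ ((1 - k : ℝ) / k)
      = k * ((1 - q ^ (2 * k + 1)) / (2 * k + 1) - 2 * q ^ k * (1 - q ^ (k + 1)) / (k + 1)
          + q ^ (2 * k) * (1 - q)) := by
  have hk0 : (0 : ℝ) < k := by positivity
  have h1 : (1 - k : ℝ) / k + 1 = ((1 : ℕ) : ℝ) / k := by field_simp; ring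
  have h2 : (1 - k : ℝ) / k + 2 = ((k + 1 : ℕ) : ℝ) / k := by push_cast; field_simp; ring
  have h3 : (1 - k : ℝ) / k + 3 = ((2 * k + 1 : ℕ) : ℝ) / k := by push_cast; field_simp; ring
  have ha : -1 < (1 - k : ℝ) / k := by rw [lt_div_iff₀ hk0]; linarith
  rw [integral_sq_mul_add_rpow ha (by positivity) zero_le_one, h1, h2, h3,
    pow_rpow_div_natCast hq hk, pow_rpow_div_natCast hq hk, pow_rpow_div_natCast hq hk]
  simp only [one_rpow, Nat.cast_one, pow_one, Nat.cast_add, Nat.cast_mul, Nat.cast_ofNat]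
  field_simp
  ring

theorem stmt12 (n : ℕ) (hn : 2 ≤ n) (p : ℝ) (hp : p ∈ Set.Ioc (0 : ℝ) 1)
    (lam : ℝ) (hlam : lam = (1 - p) ^ (n - 1)) :
    (∫ x in (0 : ℝ)..(1 - lam),
        x ^ 2 * ((lam + x) ^ (((2 : ℝ) - n) / ((n : ℝ) - 1)) / (p * ((n : ℝ) - 1))))
      = (1 / p) * (1 / (2 * n - 1) - (2 / n) * (1 - p) ^ (n - 1) + (1 - p) ^ (2 * n - 2)
          - (1 - p) ^ (2 * n - 1) * (2 * ((n : ℝ) - 1) ^ 2 / (n * (2 * n - 1)))) ∧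
    (∫ x in (0 : ℝ)..(1 - lam),
        x ^ 2 * ((lam + x) ^ (((2 : ℝ) - n) / ((n : ℝ) - 1)) / (p * ((n : ℝ) - 1))))
      - ((1 / (n * p)) * (1 - (1 - p) ^ (n - 1) * (1 + p * ((n : ℝ) - 1)))) ^ 2
      = (1 - (1 - p) ^ (2 * n - 1)) / ((2 * n - 1) * p)
          - (1 - (1 - p) ^ n) ^ 2 / (n ^ 2 * p ^ 2) := by
  obtain ⟨hp0, hp1⟩ := hp
  obtain ⟨k, rfl⟩ : ∃ k, n = k + 1 := ⟨n - 1, by omega⟩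
  have hk : k ≠ 0 := by omega
  have hexp : ((2 : ℝ) - (k + 1 : ℕ)) / ((k + 1 : ℕ) - 1 : ℝ) = (1 - k : ℝ) / k := by
    push_cast; ring
  simp only [Nat.add_sub_cancel, show 2 * (k + 1) - 1 = 2 * k + 1 by omega,
    show 2 * (k + 1) - 2 = 2 * k by omega] at hlam ⊢
  simp_rw [← mul_div_assoc]
  rw [intervalIntegral.integral_div, hexp, hlam, integral_sq_mul_pow_add_rpow (by linarith) hk]
  push_cast [add_sub_cancel_right]
  rw [show 2 * ((k : ℝ) + 1) - 1 = 2 * k + 1 by ring]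
  constructor <;> field_simp <;> ring
end

section
/- Let n ≥ 2 be an integer and p ∈ (0,1]. With λ = (1-p)^{n-1}, the expected revenue of a sum-profit auctioneer in the symmetric equilibrium, namely np·(1/(np))(1 − (1-p)^{n-1}(1+p(n-1))) = 1 − (1-p)^{n-1}(1 + p(n-1)), is strictly increasing in p on (0,1) and strictly increasing in n (for fixed p ∈ (0,1)). -/
/-! With `k = n - 1`, the revenue is `1 - (1 - p) ^ k * (1 + k p)`, one minus the probability that at
most one of `k` independent bidders participates. That probability decreases strictly in `p`,
since its derivative is `-k (k + 1) p (1 - p) ^ (k - 1)`, and strictly in `k`, since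
`(1 - p) (1 + (k + 1) p) = 1 + k p - (k + 1) p ^ 2`. -/

open Set

lemma hasDerivAt_one_sub_pow_succ_mul (k : ℕ) (x : ℝ) :
    HasDerivAt (fun x : ℝ => (1 - x) ^ (k + 1) * (1 + x * (k + 1)))
      (-((k + 1) * (k + 2) * x * (1 - x) ^ k)) x := by
  have hpow : HasDerivAt (fun x : ℝ => (1 - x) ^ (k + 1)) ((k + 1) * (1 - x) ^ k * (-1)) x := by
    simpa using ((hasDerivAt_id x).const_sub 1).fun_pow (k + 1)
  have hlin : HasDerivAt (fun x : ℝ => 1 + x * (k + 1)) (k + 1) x := by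
    simpa using ((hasDerivAt_id x).mul_const ((k : ℝ) + 1)).const_add 1
  exact (hpow.mul hlin).congr_deriv (by ring)

lemma strictAntiOn_one_sub_pow_mul (k : ℕ) (hk : 1 ≤ k) :
    StrictAntiOn (fun x : ℝ => (1 - x) ^ k * (1 + x * k)) (Icc 0 1) := by
  obtain ⟨j, rfl⟩ : ∃ j, k = j + 1 := ⟨k - 1, by omega⟩
  push_cast
  refine strictAntiOn_of_hasDerivWithinAt_neg (convex_Icc 0 1) (by fun_prop)
    (fun x _ => (hasDerivAt_one_sub_pow_succ_mul j x).hasDerivWithinAt) fun x hx => ?_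
  rw [interior_Icc] at hx
  have hpow : 0 < (1 - x) ^ j := pow_pos (by linarith [hx.2]) j
  have hcoef : 0 < ((j : ℝ) + 1) * (j + 2) * x := by have := hx.1; positivity
  exact neg_neg_of_pos (mul_pos hcoef hpow)

lemma strictAnti_one_sub_pow_mul {p : ℝ} (hp : p ∈ Ioo 0 1) :
    StrictAnti (fun k : ℕ => (1 - p) ^ k * (1 + p * k)) := by
  refine strictAnti_nat_of_succ_lt fun k => ?_
  have hpow : 0 < (1 - p) ^ k := pow_pos (by linarith [hp.2]) k
  have : 0 < ((k : ℝ) + 1) * p ^ 2 := by have := hp.1; positivity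
  calc (1 - p) ^ (k + 1) * (1 + p * ↑(k + 1))
      = (1 - p) ^ k * (1 + p * k - (k + 1) * p ^ 2) := by push_cast; ring
    _ < (1 - p) ^ k * (1 + p * k) := by gcongr; linarith

theorem stmt13 (n : ℕ) (hn : 2 ≤ n) :
    (∀ p q : ℝ, p ∈ Set.Ioo (0 : ℝ) 1 → q ∈ Set.Ioo (0 : ℝ) 1 → p < q →
        1 - (1 - p) ^ (n - 1) * (1 + p * ((n : ℝ) - 1))
          < 1 - (1 - q) ^ (n - 1) * (1 + q * ((n : ℝ) - 1))) ∧
    (∀ p : ℝ, p ∈ Set.Ioo (0 : ℝ) 1 → ∀ m : ℕ, 2 ≤ m → m < n →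
        1 - (1 - p) ^ (m - 1) * (1 + p * ((m : ℝ) - 1))
          < 1 - (1 - p) ^ (n - 1) * (1 + p * ((n : ℝ) - 1))) := by
  rw [← Nat.cast_pred (by omega : 0 < n)]
  refine ⟨fun p q hp hq hpq => ?_, fun p hp m hm hmn => ?_⟩
  · refine sub_lt_sub_left ?_ 1
    exact strictAntiOn_one_sub_pow_mul (n - 1) (by omega) (Ioo_subset_Icc_self hp)
      (Ioo_subset_Icc_self hq) hpq
  · rw [← Nat.cast_pred (by omega : 0 < m)]
    exact sub_lt_sub_left (strictAnti_one_sub_pow_mul hp (by omega : m - 1 < n - 1)) 1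
end

section
/- Let n ≥ 2 be an integer and p ∈ (0,1]. The variance of a bidder's equilibrium profit, Var = (n−1)/(n(2n−1)) − (1-p)^n/n + (p + 1/(2n−1))(1-p)^{2n-1}, is monotonically increasing in p on (0,1); equivalently, for all p ∈ (0,1), (1-p)^{n-1} ≥ 2np(1-p)^{2n-2}. -/
/-!
The derivative of the variance is `(1 - p)^(n-1) - 2 n p (1 - p)^(2n-2)`, so both claims reduce to
`2 n p (1 - p)^(n-1) ≤ 1`. With `m = n - 1` and `y = (1 + 1/m)(1 - p)`, the weighted AM-GM
inequality `y^m (m + 1 - m y) ≤ 1` reads `(1 + 1/m)^m · n p (1 - p)^m ≤ 1`, and Bernoulli's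
inequality gives `(1 + 1/m)^m ≥ 2`.
-/

lemma pow_mul_sub_le_one {R : Type*} [CommRing R] [LinearOrder R] [IsStrictOrderedRing R]
    {y : R} (hy : 0 ≤ y) (m : ℕ) : y ^ m * (m + 1 - m * y) ≤ 1 := by
  induction m with
  | zero => simp
  | succ m ih =>
    have hstep : y ^ (m + 1) * ((m + 1 : ℕ) + 1 - (m + 1 : ℕ) * y)
        = y ^ m * (m + 1 - m * y) - (m + 1) * y ^ m * (y - 1) ^ 2 := by
      push_cast; ring
    have : 0 ≤ (m + 1) * y ^ m * (y - 1) ^ 2 := by positivity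
    rw [hstep]; linarith

lemma two_le_one_add_inv_pow {m : ℕ} (hm : m ≠ 0) : (2 : ℝ) ≤ (1 + 1 / m) ^ m := by
  have hBernoulli :=
    one_add_mul_le_pow ((neg_nonpos.2 zero_le_two).trans (by positivity : (0 : ℝ) ≤ 1 / m)) m
  rwa [mul_one_div_cancel (by exact_mod_cast hm), one_add_one_eq_two] at hBernoulli

lemma two_mul_mul_one_sub_pow_le_one {m : ℕ} (hm : m ≠ 0) {p : ℝ} (hp₀ : 0 ≤ p) (hp₁ : p ≤ 1) :
    2 * (m + 1) * p * (1 - p) ^ m ≤ 1 := by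
  have hm' : (m : ℝ) ≠ 0 := by exact_mod_cast hm
  have hq : 0 ≤ 1 - p := by linarith
  have hAMGM := pow_mul_sub_le_one (show 0 ≤ (1 + 1 / (m : ℝ)) * (1 - p) by positivity) m
  have hsub : (m : ℝ) + 1 - m * ((1 + 1 / m) * (1 - p)) = (m + 1) * p := by
    field_simp; ring
  rw [hsub, mul_pow] at hAMGM
  have hpos : 0 ≤ (m + 1) * p * (1 - p) ^ m := by positivity
  nlinarith [two_le_one_add_inv_pow hm]

lemma two_mul_mul_one_sub_pow_le {n : ℕ} (hn : 2 ≤ n) {p : ℝ} (hp₀ : 0 ≤ p) (hp₁ : p ≤ 1) :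
    2 * n * p * (1 - p) ^ (2 * n - 2) ≤ (1 - p) ^ (n - 1) := by
  have hbound := two_mul_mul_one_sub_pow_le_one (m := n - 1) (by omega) hp₀ hp₁
  rw [Nat.cast_pred (by omega), sub_add_cancel] at hbound
  calc 2 * n * p * (1 - p) ^ (2 * n - 2)
      = 2 * n * p * (1 - p) ^ (n - 1) * (1 - p) ^ (n - 1) := by
        rw [mul_assoc _ ((1 - p) ^ _), ← pow_add]; congr 2; omega
    _ ≤ 1 * (1 - p) ^ (n - 1) := by gcongr
    _ = (1 - p) ^ (n - 1) := one_mul _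

noncomputable def bidderProfitVariance (n : ℕ) (p : ℝ) : ℝ :=
  ((n : ℝ) - 1) / (n * (2 * n - 1)) - (1 - p) ^ n / n
    + (p + 1 / (2 * n - 1)) * (1 - p) ^ (2 * n - 1)

lemma hasDerivAt_bidderProfitVariance {n : ℕ} (hn : n ≠ 0) (p : ℝ) :
    HasDerivAt (bidderProfitVariance n)
      ((1 - p) ^ (n - 1) - 2 * n * p * (1 - p) ^ (2 * n - 2)) p := by
  have hsub : HasDerivAt (fun q : ℝ => 1 - q) (-1) p := (hasDerivAt_id p).const_sub 1
  have h := ((hsub.pow n).div_const (n : ℝ)).const_sub (((n : ℝ) - 1) / (n * (2 * n - 1)))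
    |>.add (((hasDerivAt_id p).add_const (1 / (2 * (n : ℝ) - 1))).mul (hsub.pow (2 * n - 1)))
  refine h.congr_deriv ?_
  have hn' : (n : ℝ) ≠ 0 := by exact_mod_cast hn
  have h2n : (2 * (n : ℝ) - 1) ≠ 0 := by
    have : (1 : ℝ) ≤ n := by exact_mod_cast Nat.one_le_iff_ne_zero.2 hn
    linarith
  simp only [Pi.pow_apply, id]
  rw [Nat.cast_sub (by omega), show 2 * n - 1 - 1 = 2 * n - 2 by omega,
    show 2 * n - 1 = 2 * n - 2 + 1 by omega, pow_succ]
  push_cast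
  have hfirst : (n : ℝ) * (1 - p) ^ (n - 1) * -1 / n = -(1 - p) ^ (n - 1) := by field_simp
  have hsecond : (p + 1 / (2 * n - 1)) * (2 * n - 1) = (2 * n - 1) * p + 1 := by field_simp
  linear_combination -hfirst - (1 - p) ^ (2 * n - 2) * hsecond

theorem stmt19 (n : ℕ) (hn : 2 ≤ n) :
    (∀ p : ℝ, p ∈ Set.Ioo (0 : ℝ) 1 →
      2 * n * p * (1 - p) ^ (2 * n - 2) ≤ (1 - p) ^ (n - 1)) ∧
    MonotoneOn (fun p : ℝ =>
        ((n : ℝ) - 1) / (n * (2 * n - 1)) - (1 - p) ^ n / n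
          + (p + 1 / (2 * n - 1)) * (1 - p) ^ (2 * n - 1))
      (Set.Ioo (0 : ℝ) 1) := by
  have hderiv := hasDerivAt_bidderProfitVariance (n := n) (by omega)
  have hle : ∀ p ∈ Set.Ioo (0 : ℝ) 1, 2 * n * p * (1 - p) ^ (2 * n - 2) ≤ (1 - p) ^ (n - 1) :=
    fun p hp => two_mul_mul_one_sub_pow_le hn hp.1.le hp.2.le
  refine ⟨hle, monotoneOn_of_hasDerivWithinAt_nonneg (convex_Ioo 0 1)
    (fun p _ => (hderiv p).continuousAt.continuousWithinAt)
    (fun p _ => (hderiv p).hasDerivWithinAt) fun p hp => ?_⟩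
  rw [interior_Ioo] at hp
  exact sub_nonneg.2 (hle p hp)
end
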